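/- Under the Basuev condition V(a) > 2μ(a), any configuration (x_1,...,x_n) of particles interacting via V_a in which some pair of particles is at distance ≤ a contains a particle whose interaction energy with all others is strictly positive: there exists i with Σ_{j≠i} V_a(|x_i − x_j|) > 0. -/

import Mathlib

/-- The negative part `V⁻ = (|V| − V)/2`. -/
noncomputable def Vminus (V : ℝ → ℝ) (r : ℝ) : ℝ := (|V r| - V r) / 2

/-- The set of values `∑_i V⁻(|x_i|)` over configurations with pairwise distances `> a`;
`μ(a)` is its supremum. -/
def muSet (d : ℕ) (V : ℝ → ℝ) (a : ℝ) : Set ℝ :=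
  { t | ∃ (m : ℕ) (x : Fin m → EuclideanSpace ℝ (Fin d)),
      (∀ i j, i ≠ j → a < dist (x i) (x j)) ∧ t = ∑ i, Vminus V (‖x i‖) }

noncomputable def mu (d : ℕ) (V : ℝ → ℝ) (a : ℝ) : ℝ := sSup (muSet d V a)

/-- The truncated potential `V_a`. -/
noncomputable def Vtrunc (V : ℝ → ℝ) (a : ℝ) : ℝ → ℝ := fun r => if r ≤ a then V a else V r

/-- Greedy coloring: a graph with all degrees `≤ L` is `(L+1)`-colorable. -/
lemma greedy_coloring {m L : ℕ} (R : Fin m → Fin m → Prop) [DecidableRel R]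
    (hsym : ∀ {j k}, R j k → R k j) (hirr : ∀ j, ¬ R j j) :
    ∀ S : Finset (Fin m), (∀ v, (S.filter (R v)).card ≤ L) →
      ∃ c : Fin m → Fin (L + 1), ∀ j ∈ S, ∀ k ∈ S, c j = c k → ¬ R j k := by
  intro S
  induction S using Finset.strongInduction with
  | _ S ih =>
    intro hdeg
    rcases S.eq_empty_or_nonempty with rfl | ⟨v, hv⟩
    · exact ⟨fun _ => 0, by simp⟩
    · obtain ⟨c, hc⟩ := ih (S.erase v) (Finset.erase_ssubset hv) (fun w =>
        le_trans (Finset.card_le_card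
          (Finset.filter_subset_filter _ (Finset.erase_subset _ _))) (hdeg w))
      set Nv := (S.erase v).filter (R v) with hNv
      have hcard : (Nv.image c).card ≤ L :=
        le_trans Finset.card_image_le
          (le_trans (Finset.card_le_card
            (Finset.filter_subset_filter _ (Finset.erase_subset _ _))) (hdeg v))
      obtain ⟨t, ht⟩ : ∃ t : Fin (L + 1), t ∉ Nv.image c := by
        by_contra h
        push_neg at h
        have h2 : (Finset.univ : Finset (Fin (L + 1))) ⊆ Nv.image c := fun t _ => h t
        have := Finset.card_le_card h2
        simp only [Finset.card_univ, Fintype.card_fin] at this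
        omega
      refine ⟨Function.update c v t, ?_⟩
      intro j hj k hk hjk hR2
      by_cases hjv : j = v
      · by_cases hkv : k = v
        · exact absurd hR2 (by rw [hjv, hkv]; exact hirr v)
        · have hck : Function.update c v t k = c k := Function.update_of_ne hkv _ _
          have hcj : Function.update c v t j = t := by
            rw [hjv]; exact Function.update_self _ _ _
          have hRvk : R v k := by rw [← hjv]; exact hR2
          have hkNv : k ∈ Nv := Finset.mem_filter.mpr ⟨Finset.mem_erase.mpr ⟨hkv, hk⟩, hRvk⟩
          exact ht (Finset.mem_image.mpr ⟨k, hkNv, by rw [← hck, ← hjk, hcj]⟩)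
      · by_cases hkv : k = v
        · have hcj : Function.update c v t j = c j := Function.update_of_ne hjv _ _
          have hck : Function.update c v t k = t := by
            rw [hkv]; exact Function.update_self _ _ _
          have hRvj : R v j := by rw [← hkv]; exact hsym hR2
          have hjNv : j ∈ Nv := Finset.mem_filter.mpr ⟨Finset.mem_erase.mpr ⟨hjv, hj⟩, hRvj⟩
          exact ht (Finset.mem_image.mpr ⟨j, hjNv, by rw [← hcj, hjk, hck]⟩)
        · have hcj : Function.update c v t j = c j := Function.update_of_ne hjv _ _
          have hck : Function.update c v t k = c k := Function.update_of_ne hkv _ _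
          exact hc j (Finset.mem_erase.mpr ⟨hjv, hj⟩) k (Finset.mem_erase.mpr ⟨hkv, hk⟩)
            (by rw [← hcj, ← hck, hjk]) hR2

/-- Under the Basuev condition `V(a) > 2μ(a)` (with `V(r) ≥ V(a) > 0` for `r ≤ a`), any
configuration for `V_a` containing a pair of particles at distance `≤ a` has a particle
whose interaction energy with all the others is strictly positive. -/
theorem stmt14 (d : ℕ) (V : ℝ → ℝ) (a : ℝ) (ha : 0 < a)
    (hcore : ∀ r, 0 ≤ r → r ≤ a → V a ≤ V r) (hVa : 0 < V a)
    (hbdd : BddAbove (muSet d V a))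
    (hgap : 2 * mu d V a < V a)
    (m : ℕ) (x : Fin m → EuclideanSpace ℝ (Fin d))
    (hclose : ∃ i j, i ≠ j ∧ dist (x i) (x j) ≤ a) :
    ∃ i, 0 < ∑ j ∈ Finset.univ.erase i, Vtrunc V a (dist (x i) (x j)) := by
  classical
  obtain ⟨i0, j0, hij0, hd0⟩ := hclose
  haveI : Nonempty (Fin m) := ⟨i0⟩
  -- μ(a) ≥ 0
  have hmu0 : 0 ≤ mu d V a := le_csSup hbdd ⟨0, Fin.elim0, fun i => i.elim0, by simp⟩
  -- degrees
  set deg : Fin m → ℕ :=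
    fun v => ((Finset.univ.erase v).filter (fun j => dist (x v) (x j) ≤ a)).card with hdeg
  set L := Finset.univ.sup deg with hLdef
  obtain ⟨i, -, hiL⟩ := Finset.exists_mem_eq_sup Finset.univ Finset.univ_nonempty deg
  have hL1 : 1 ≤ L := by
    have hj0 : j0 ∈ (Finset.univ.erase i0).filter (fun j => dist (x i0) (x j) ≤ a) := by
      simp [Finset.mem_erase, hij0.symm, hd0]
    have h1 : 1 ≤ deg i0 := Finset.card_pos.mpr ⟨j0, hj0⟩
    exact le_trans h1 (Finset.le_sup (Finset.mem_univ _))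
  -- the closeness relation and its greedy coloring
  set R : Fin m → Fin m → Prop := fun j k => j ≠ k ∧ dist (x j) (x k) ≤ a with hR
  have hRd : DecidableRel R := fun j k => instDecidableAnd
  obtain ⟨c, hc⟩ := greedy_coloring R
    (fun {j k} h => ⟨h.1.symm, by rw [dist_comm]; exact h.2⟩)
    (fun j h => h.1 rfl)
    Finset.univ
    (by
      intro v
      have hEq : Finset.univ.filter (R v)
          = (Finset.univ.erase v).filter (fun j => dist (x v) (x j) ≤ a) := by
        ext k
        constructor
        · intro hk
          have h1 := Finset.mem_filter.mp hk
          have h2 : v ≠ k ∧ dist (x v) (x k) ≤ a := h1.2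
          exact Finset.mem_filter.mpr
            ⟨Finset.mem_erase.mpr ⟨h2.1.symm, Finset.mem_univ k⟩, h2.2⟩
        · intro hk
          have h1 := Finset.mem_filter.mp hk
          have h2 : v ≠ k ∧ dist (x v) (x k) ≤ a :=
            ⟨((Finset.mem_erase.mp h1.1).1).symm, h1.2⟩
          exact Finset.mem_filter.mpr ⟨Finset.mem_univ k, h2⟩
      rw [hEq]
      exact Finset.le_sup (f := deg) (Finset.mem_univ v))
  refine ⟨i, ?_⟩
  set N := (Finset.univ.erase i).filter (fun j => dist (x i) (x j) ≤ a) with hN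
  set F := (Finset.univ.erase i).filter (fun j => ¬ dist (x i) (x j) ≤ a) with hF
  have hsplit : ∑ j ∈ Finset.univ.erase i, Vtrunc V a (dist (x i) (x j))
      = (∑ j ∈ N, Vtrunc V a (dist (x i) (x j)))
        + ∑ j ∈ F, Vtrunc V a (dist (x i) (x j)) :=
    (Finset.sum_filter_add_sum_filter_not _ _ _).symm
  have hNsum : ∑ j ∈ N, Vtrunc V a (dist (x i) (x j)) = (L : ℝ) * V a := by
    rw [Finset.sum_congr rfl (fun j hj => ?_), Finset.sum_const]
    · have hcard : N.card = L := by show deg i = L; rw [hLdef, hiL]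
      rw [hcard, nsmul_eq_mul]
    · exact if_pos (Finset.mem_filter.mp hj).2
  have hFsum : ∑ j ∈ F, Vtrunc V a (dist (x i) (x j))
      = ∑ j ∈ F, V (dist (x i) (x j)) :=
    Finset.sum_congr rfl (fun j hj => if_neg (Finset.mem_filter.mp hj).2)
  -- the negative-part bound on the far sum
  have hVm : ∀ r : ℝ, -(Vminus V r) ≤ V r := by
    intro r
    have := neg_abs_le (V r)
    simp only [Vminus]
    linarith
  have hlow : -(∑ j ∈ F, Vminus V (dist (x i) (x j))) ≤ ∑ j ∈ F, V (dist (x i) (x j)) := by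
    rw [← Finset.sum_neg_distrib]
    exact Finset.sum_le_sum (fun j _ => hVm _)
  -- each color class contributes at most μ
  have hclass : ∀ t : Fin (L + 1),
      ∑ j ∈ F.filter (fun j => c j = t), Vminus V (dist (x i) (x j)) ≤ mu d V a := by
    intro t
    set T := F.filter (fun j => c j = t) with hT
    apply le_csSup hbdd
    refine ⟨T.card, fun p => x ((T.equivFin.symm p) : Fin m) - x i, ?_, ?_⟩
    · intro p q hpq
      set j := ((T.equivFin.symm p) : Fin m)
      set k := ((T.equivFin.symm q) : Fin m)
      have hjk : j ≠ k := by
        intro h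
        exact hpq (T.equivFin.symm.injective (Subtype.coe_injective h))
      have hdd : dist (x j - x i) (x k - x i) = dist (x j) (x k) := dist_sub_right _ _ _
      rw [hdd]
      by_contra hle
      push_neg at hle
      have hcc : c j = c k := by
        have h1 := (Finset.mem_filter.mp (T.equivFin.symm p).2).2
        have h2 := (Finset.mem_filter.mp (T.equivFin.symm q).2).2
        rw [h1, h2]
      exact hc j (Finset.mem_univ _) k (Finset.mem_univ _) hcc ⟨hjk, hle⟩
    · have key : ∀ j : {y // y ∈ T}, Vminus V ‖x (j : Fin m) - x i‖
          = Vminus V (dist (x i) (x (j : Fin m))) := by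
        intro j
        rw [← dist_eq_norm, dist_comm]
      calc ∑ j ∈ T, Vminus V (dist (x i) (x j))
          = ∑ j : {y // y ∈ T}, Vminus V (dist (x i) (x (j : Fin m))) :=
            (Finset.sum_coe_sort T _).symm
        _ = ∑ j : {y // y ∈ T}, Vminus V ‖x (j : Fin m) - x i‖ := by
            exact Finset.sum_congr rfl (fun j _ => (key j).symm)
        _ = ∑ p : Fin T.card, Vminus V ‖x ((T.equivFin.symm p) : Fin m) - x i‖ :=
            (Equiv.sum_comp T.equivFin.symm _).symm
  have hFbound : ∑ j ∈ F, Vminus V (dist (x i) (x j)) ≤ ((L : ℝ) + 1) * mu d V a := by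
    have hfib : ∑ t : Fin (L + 1), ∑ j ∈ F.filter (fun j => c j = t),
        Vminus V (dist (x i) (x j)) = ∑ j ∈ F, Vminus V (dist (x i) (x j)) :=
      Finset.sum_fiberwise F c _
    rw [← hfib]
    calc ∑ t : Fin (L + 1), ∑ j ∈ F.filter (fun j => c j = t), Vminus V (dist (x i) (x j))
        ≤ ∑ _t : Fin (L + 1), mu d V a := Finset.sum_le_sum (fun t _ => hclass t)
      _ = ((L : ℝ) + 1) * mu d V a := by
          rw [Finset.sum_const, Finset.card_univ, Fintype.card_fin, nsmul_eq_mul]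
          push_cast
          ring
  -- put it all together
  rw [hsplit, hNsum, hFsum]
  have hL1' : (1 : ℝ) ≤ (L : ℝ) := by exact_mod_cast hL1
  nlinarith [hlow, hFbound, hmu0, hgap]
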